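/- Suppose h₁,…,h_P ∈ C¹(T,ℝ³) satisfy dhᵢ(u)ᵀ dq̄(u) = 0 for all u ∈ T and all i, where q̄ is an immersion. Then for every α ∈ ℝ^P and every u ∈ T, the differential of F(α) = q̄ + ∑αᵢhᵢ satisfies dF(α)(u)ᵀ dF(α)(u) = dq̄(u)ᵀdq̄(u) + D(u)ᵀD(u) where D = ∑αᵢ dhᵢ; consequently dF(α)(u) is injective and F(α) is an immersion for all α. -/

import Mathlib

/-! By orthogonality the cross terms of the Gram matrix of `dq̄ + D` vanish, so it equals
`dq̄ᵀdq̄ + DᵀD`: positive definite plus positive semidefinite, hence invertible, and a matrix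
whose Gram matrix is invertible is injective. -/

open Matrix

namespace Matrix

variable {m n R : Type*} [Fintype m]

theorem transpose_mul_self_add_of_transpose_mul_eq_zero [CommSemiring R] {A B : Matrix m n R}
    (h : Bᵀ * A = 0) : (A + B)ᵀ * (A + B) = Aᵀ * A + Bᵀ * B := by
  have h' : Aᵀ * B = 0 := by simpa using congrArg transpose h
  rw [transpose_add, Matrix.add_mul, Matrix.mul_add, Matrix.mul_add, h, h', add_zero, zero_add]

theorem transpose_sum_smul_mul_eq_zero [CommSemiring R] {ι : Type*} (s : Finset ι) (c : ι → R)
    {A : Matrix m n R} {B : ι → Matrix m n R} (h : ∀ i, (B i)ᵀ * A = 0) :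
    (∑ i ∈ s, c i • B i)ᵀ * A = 0 := by
  rw [transpose_sum, Matrix.sum_mul]
  exact Finset.sum_eq_zero fun i _ => by rw [transpose_smul, Matrix.smul_mul, h, smul_zero]

theorem mulVec_injective_of_mul_mulVec_injective [Fintype n] {l : Type*} [Semiring R]
    {M : Matrix l m R} {N : Matrix m n R} (h : Function.Injective (M * N).mulVec) :
    Function.Injective N.mulVec :=
  Function.Injective.of_comp (f := M.mulVec) fun x y hxy => h <| by
    simpa only [Function.comp_apply, mulVec_mulVec] using hxy

theorem mulVec_injective_of_posDef_transpose_mul_self [Fintype n] [DecidableEq n]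
    {M : Matrix m n ℝ} (h : (Mᵀ * M).PosDef) : Function.Injective M.mulVec :=
  mulVec_injective_of_mul_mulVec_injective (mulVec_injective_of_isUnit h.isUnit)

end Matrix

/-- Suppose h₁,…,h_P ∈ C¹(T,ℝ³) satisfy dhᵢ(u)ᵀ dq̄(u) = 0 for all u and i,
where q̄ is an immersion (i.e. dq̄(u)ᵀdq̄(u) is positive definite for all u; differentials
are 3×2 matrices in local coordinates). Then for every α and u, the differential of
F(α) = q̄ + ∑αᵢhᵢ, namely dF(α)(u) = dq̄(u) + ∑αᵢdhᵢ(u), satisfies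
dF(α)(u)ᵀ dF(α)(u) = dq̄(u)ᵀdq̄(u) + D(u)ᵀD(u) with D = ∑αᵢ dhᵢ; consequently dF(α)(u) is
injective (as a linear map) and F(α) is an immersion for all α. -/
theorem orthogonal_basis_fields_give_immersions
    {T : Type*} {P : ℕ}
    (dq : T → Matrix (Fin 3) (Fin 2) ℝ)
    (dh : Fin P → T → Matrix (Fin 3) (Fin 2) ℝ)
    (hq_imm : ∀ u, ((dq u)ᵀ * dq u).PosDef)
    (horth : ∀ u (i : Fin P), (dh i u)ᵀ * dq u = 0)
    (dF : (Fin P → ℝ) → T → Matrix (Fin 3) (Fin 2) ℝ)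
    (hdF : ∀ α u, dF α u = dq u + ∑ i, α i • dh i u) :
    ∀ (α : Fin P → ℝ) (u : T),
      (dF α u)ᵀ * dF α u
        = (dq u)ᵀ * dq u + (∑ i, α i • dh i u)ᵀ * (∑ i, α i • dh i u) ∧
      Function.Injective (dF α u).mulVec := by
  intro α u
  have hgram : (dF α u)ᵀ * dF α u
      = (dq u)ᵀ * dq u + (∑ i, α i • dh i u)ᵀ * (∑ i, α i • dh i u) := by
    rw [hdF]
    exact transpose_mul_self_add_of_transpose_mul_eq_zero
      (transpose_sum_smul_mul_eq_zero _ α (horth u))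
  refine ⟨hgram, mulVec_injective_of_posDef_transpose_mul_self ?_⟩
  rw [hgram]
  exact (hq_imm u).add_posSemidef <| by
    simpa using posSemidef_conjTranspose_mul_self (∑ i, α i • dh i u)
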